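/- arXiv:1804.09892 — 3 statements merged into one kernel-verified Lean document; each statement's English description precedes it below -/
import Mathlib

section
/- Let r and s be natural numbers (with r, s ≥ 1) and set α = (r-1)(s-1)/(rs). There exists an effectively computable constant C > 0, depending only on r and s (for instance C = 2^{rs}·rs works), such that for every sufficiently large natural number n, the interval [n, n + C·n^α] contains a natural number m which can be written as m = A^r + B^s with A and B non-negative integers. -/
/-! Greedy choice. With `A = ⌊n^(1/r)⌋`, the remainder `h = n - A^r` is less than the gap
`(A+1)^r - A^r ≤ r 2^(r-1) n^((r-1)/r)`. The least `s`-th power `B^s ≥ h` then overshoots `h` by at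
most `s 2^(s-1) h^((s-1)/s) ≤ r s 2^(r+s-2) n^((r-1)(s-1)/(rs))`, so `m = A^r + B^s` works with
`C = r s 2^(r+s-2)` for every `n`. -/

lemma Real.rpow_inv_natCast_pow_sub_one {x : ℝ} (hx : 0 ≤ x) {k : ℕ} (hk : 1 ≤ k) :
    (x ^ (k⁻¹ : ℝ)) ^ (k - 1) = x ^ (((k : ℝ) - 1) / k) := by
  rw [← Real.rpow_natCast, ← Real.rpow_mul hx, Nat.cast_sub hk, Nat.cast_one, inv_mul_eq_div]

lemma exists_nat_pow_le_lt_succ_pow {k : ℕ} (hk : 1 ≤ k) {x : ℝ} (hx : 1 ≤ x) :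
    ∃ a : ℕ, (a : ℝ) ^ k ≤ x ∧ x < ((a : ℝ) + 1) ^ k ∧
      ((a : ℝ) + 1) ^ k - (a : ℝ) ^ k ≤ k * 2 ^ (k - 1) * x ^ (((k : ℝ) - 1) / k) := by
  set y := x ^ (k⁻¹ : ℝ)
  have hy : y ^ k = x := Real.rpow_inv_natCast_pow (by linarith) (by omega)
  have hy1 : 1 ≤ y := Real.one_le_rpow hx (by positivity)
  have ha_le : (⌊y⌋₊ : ℝ) ≤ y := Nat.floor_le (by linarith)
  have ha_lt : y < ⌊y⌋₊ + 1 := Nat.lt_floor_add_one y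
  have ha1 : (1 : ℝ) ≤ ⌊y⌋₊ := by exact_mod_cast (Nat.one_le_floor_iff y).2 hy1
  refine ⟨⌊y⌋₊, hy ▸ by gcongr, hy ▸ by gcongr, ?_⟩
  calc ((⌊y⌋₊ : ℝ) + 1) ^ k - (⌊y⌋₊ : ℝ) ^ k
      ≤ k * ((⌊y⌋₊ : ℝ) + 1) ^ (k - 1) := by
        have h := abs_pow_sub_pow_le ((⌊y⌋₊ : ℝ) + 1) ⌊y⌋₊ k
        rw [add_sub_cancel_left, abs_one, one_mul, Nat.abs_cast,
          abs_of_nonneg (by positivity : (0 : ℝ) ≤ ⌊y⌋₊ + 1), max_eq_left (by linarith)] at h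
        exact (le_abs_self _).trans h
    _ ≤ k * (2 * y) ^ (k - 1) := by gcongr; linarith
    _ = k * 2 ^ (k - 1) * x ^ (((k : ℝ) - 1) / k) := by
        rw [mul_pow, Real.rpow_inv_natCast_pow_sub_one (by linarith) hk, mul_assoc]

lemma exists_pow_le_sub_pow_le {k : ℕ} (hk : 1 ≤ k) (n : ℕ) :
    ∃ a : ℕ, a ^ k ≤ n ∧
      ((n - a ^ k : ℕ) : ℝ) ≤ k * 2 ^ (k - 1) * (n : ℝ) ^ (((k : ℝ) - 1) / k) := by
  rcases Nat.eq_zero_or_pos n with rfl | hn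
  · exact ⟨0, by simp [show k ≠ 0 by omega], by simp; positivity⟩
  obtain ⟨a, hle, hlt, hgap⟩ := exists_nat_pow_le_lt_succ_pow hk (x := n) (by exact_mod_cast hn)
  refine ⟨a, by exact_mod_cast hle, ?_⟩
  rw [Nat.cast_sub (by exact_mod_cast hle)]
  push_cast
  linarith

lemma exists_le_pow_le_add {k : ℕ} (hk : 1 ≤ k) (n : ℕ) :
    ∃ b : ℕ, n ≤ b ^ k ∧
      ((b ^ k : ℕ) : ℝ) ≤ n + k * 2 ^ (k - 1) * (n : ℝ) ^ (((k : ℝ) - 1) / k) := by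
  rcases Nat.eq_zero_or_pos n with rfl | hn
  · exact ⟨0, by simp, by simp [show k ≠ 0 by omega]; positivity⟩
  obtain ⟨a, hle, hlt, hgap⟩ := exists_nat_pow_le_lt_succ_pow hk (x := n) (by exact_mod_cast hn)
  refine ⟨a + 1, by exact_mod_cast hlt.le, ?_⟩
  push_cast
  linarith

lemma Real.rpow_le_mul_rpow_mul {x y c β γ : ℝ} (hx : 0 ≤ x) (hy : 0 ≤ y) (hc : 1 ≤ c)
    (hγ₀ : 0 ≤ γ) (hγ₁ : γ ≤ 1) (h : x ≤ c * y ^ β) : x ^ γ ≤ c * y ^ (β * γ) :=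
  calc x ^ γ ≤ (c * y ^ β) ^ γ := by gcongr
    _ = c ^ γ * y ^ (β * γ) := by
        rw [Real.mul_rpow (by linarith) (by positivity), Real.rpow_mul hy]
    _ ≤ c * y ^ (β * γ) := by
        gcongr
        simpa using Real.rpow_le_rpow_of_exponent_le hc hγ₁

/-- **Theorem (Bambah–Chowla type).**
Let `r` and `s` be natural numbers (with `r, s ≥ 1`) and set
`α = (r-1)(s-1)/(rs)`. There exists a constant `C > 0`, depending only on
`r` and `s`, such that for every sufficiently large natural number `n`, the
real interval `[n, n + C·n^α]` contains a natural number `m` which can be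
written as `m = A^r + B^s` with `A`, `B` non-negative integers. -/
theorem sum_of_rth_and_sth_powers_in_short_intervals
    (r s : ℕ) (hr : 1 ≤ r) (hs : 1 ≤ s) :
    ∃ C : ℝ, 0 < C ∧ ∃ n₀ : ℕ, ∀ n : ℕ, n₀ ≤ n →
      ∃ m A B : ℕ, m = A ^ r + B ^ s ∧
        (n : ℝ) ≤ (m : ℝ) ∧
        (m : ℝ) ≤ (n : ℝ) + C * (n : ℝ) ^
          ((((r : ℝ) - 1) * ((s : ℝ) - 1)) / ((r : ℝ) * (s : ℝ))) := by
  refine ⟨(r * 2 ^ (r - 1)) * (s * 2 ^ (s - 1)), by positivity, 0, fun n _ => ?_⟩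
  obtain ⟨A, hAn, hgap⟩ := exists_pow_le_sub_pow_le hr n
  obtain ⟨B, hB, hBgap⟩ := exists_le_pow_le_add hs (n - A ^ r)
  refine ⟨A ^ r + B ^ s, A, B, rfl, by exact_mod_cast (by omega : n ≤ A ^ r + B ^ s), ?_⟩
  have hcr : (1 : ℝ) ≤ r * 2 ^ (r - 1) :=
    one_le_mul_of_one_le_of_one_le (by exact_mod_cast hr) (one_le_pow₀ (by norm_num))
  have hγ₀ : (0 : ℝ) ≤ ((s : ℝ) - 1) / s := div_nonneg (by simp; exact_mod_cast hs) (by positivity)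
  have hγ₁ : ((s : ℝ) - 1) / s ≤ 1 := div_le_one_of_le₀ (by linarith) (by positivity)
  have hrem := Real.rpow_le_mul_rpow_mul (by positivity) (by positivity) hcr hγ₀ hγ₁ hgap
  rw [div_mul_div_comm] at hrem
  have hsgap := mul_le_mul_of_nonneg_left hrem (by positivity : (0 : ℝ) ≤ s * 2 ^ (s - 1))
  push_cast [Nat.cast_sub hAn] at hBgap hsgap ⊢
  linarith
end

section
/- Let (a_n)_{n≥1} be a sequence of real numbers and let α, β, γ ≥ 0 and c > 0 be real constants such that: (i) a_n = O(n^α); (ii) Σ_{n≤x} a_n = O(x^β); (iii) Σ_{n≤x} a_n² = c·x + O(x^γ). Assume α + β < 1. Then for any real δ satisfying max{α+β, γ} < δ < 1, there exists x₀ such that for all x ≥ x₀ the sequence (a_n) has at least one sign change for n in the interval [x, x + x^δ]; that is, there exist natural numbers m, n ∈ [x, x + x^δ] with a_m > 0 and a_n < 0. Consequently, the number of sign changes of (a_n) for n ≤ x is ≫ x^{1-δ} for sufficiently large x. -/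
/-!
On the window `(x, x + x^δ]` the second-moment hypothesis gives `∑ a_n² ≥ c x^δ - O(x^γ)`. If all
`a_n` in the window had the same sign, then `∑ a_n² ≤ max |a_n| · |∑ a_n| = O(x^α) · O(x^β)`,
which is `o(x^δ)` since `α + β < δ`. Hence every long window contains terms of both signs, so it
contains a sign change, and `[x/2, x]` holds `≫ x^{1-δ}` disjoint windows of length `x^δ`.
-/

open Finset Filter

section SignChanges

variable (a : ℕ → ℝ)

def SignChangeAt (n : ℕ) : Prop :=
  ∃ m, n < m ∧ a n * a m < 0 ∧ ∀ k, n < k → k < m → a k = 0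

variable {a}

theorem exists_signChangeAt_of_mul_neg {p q : ℕ} (hpq : p < q) (h : a p * a q < 0) :
    ∃ n, p ≤ n ∧ n < q ∧ SignChangeAt a n := by
  classical
  have hq : a q ≠ 0 := fun h0 => by simp [h0] at h
  obtain ⟨n, hnF, hn_max⟩ := ((Ico p q).filter fun k => a k * a q < 0).exists_max_image id
    ⟨p, by simp [hpq, h]⟩
  simp only [mem_filter, mem_Ico, id] at hnF hn_max
  obtain ⟨⟨hpn, hnq⟩, hnq_neg⟩ := hnF
  obtain ⟨m, hmG, hm_min⟩ := ((Ioc n q).filter fun k => a k ≠ 0).exists_min_image id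
    ⟨q, by simp [hnq, hq]⟩
  simp only [mem_filter, mem_Ioc, id] at hmG hm_min
  obtain ⟨⟨hnm, hmq⟩, ham⟩ := hmG
  -- `a m` has the sign of `a q`, otherwise `m` would be a larger candidate for `n`
  have hmq_pos : 0 < a m * a q := by
    rcases hmq.lt_or_eq with hlt | rfl
    · refine (mul_ne_zero ham hq).symm.lt_of_le (not_lt.1 fun hneg => ?_)
      exact (hn_max m ⟨⟨hpn.trans hnm.le, hlt⟩, hneg⟩).not_gt hnm
    · exact mul_self_pos.2 hq
  refine ⟨n, hpn, hnq, m, hnm, ?_, fun k hnk hkm => ?_⟩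
  · have : a n * a m * (a q * a q) < 0 := by
      rw [mul_mul_mul_comm]; exact mul_neg_of_neg_of_pos hnq_neg hmq_pos
    exact neg_of_mul_neg_left this (mul_self_nonneg _)
  · by_contra hk
    exact (hm_min k ⟨⟨hnk, (hkm.trans_le hmq).le⟩, hk⟩).not_gt hkm

theorem exists_signChangeAt_mem_Icc {x y : ℝ} {m n : ℕ} (hm : 0 < a m) (hn : a n < 0)
    (hxm : x ≤ m) (hmy : (m : ℝ) ≤ y) (hxn : x ≤ n) (hny : (n : ℝ) ≤ y) :
    ∃ k : ℕ, SignChangeAt a k ∧ x ≤ k ∧ (k : ℝ) ≤ y := by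
  rcases lt_or_gt_of_ne (show m ≠ n by rintro rfl; linarith) with hmn | hnm
  · obtain ⟨k, hmk, hkn, hk⟩ := exists_signChangeAt_of_mul_neg hmn (mul_neg_of_pos_of_neg hm hn)
    exact ⟨k, hk, hxm.trans (by exact_mod_cast hmk), le_trans (by exact_mod_cast hkn.le) hny⟩
  · obtain ⟨k, hnk, hkm, hk⟩ := exists_signChangeAt_of_mul_neg hnm (mul_neg_of_neg_of_pos hn hm)
    exact ⟨k, hk, hxn.trans (by exact_mod_cast hnk), le_trans (by exact_mod_cast hkm.le) hmy⟩

end SignChanges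

section SameSign

variable {ι : Type*} {s : Finset ι} {f : ι → ℝ} {B : ℝ}

theorem sum_sq_le_mul_abs_sum_of_nonneg (hB : ∀ i ∈ s, |f i| ≤ B) (hf : ∀ i ∈ s, 0 ≤ f i) :
    ∑ i ∈ s, f i ^ 2 ≤ B * |∑ i ∈ s, f i| := by
  rw [abs_of_nonneg (sum_nonneg hf), mul_sum]
  refine sum_le_sum fun i hi => ?_
  rw [sq]
  exact mul_le_mul_of_nonneg_right ((le_abs_self _).trans (hB i hi)) (hf i hi)

theorem exists_pos_and_neg_of_mul_abs_sum_lt_sum_sq (hB : ∀ i ∈ s, |f i| ≤ B)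
    (h : B * |∑ i ∈ s, f i| < ∑ i ∈ s, f i ^ 2) : (∃ i ∈ s, 0 < f i) ∧ ∃ i ∈ s, f i < 0 := by
  constructor
  · by_contra! hf
    have := sum_sq_le_mul_abs_sum_of_nonneg (f := -f) (by simpa using hB) (by simpa using hf)
    simp only [Pi.neg_apply, neg_sq, sum_neg_distrib, abs_neg] at this
    exact h.not_ge this
  · by_contra! hf
    exact h.not_ge (sum_sq_le_mul_abs_sum_of_nonneg hB hf)

end SameSign

theorem sum_Ioc_eq_sum_Icc_one_sub {M : Type*} [AddCommGroup M] (f : ℕ → M) {N K : ℕ}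
    (h : N ≤ K) : ∑ n ∈ Ioc N K, f n = ∑ n ∈ Icc 1 K, f n - ∑ n ∈ Icc 1 N, f n := by
  have hIcc : ∀ k : ℕ, Icc 1 k = Ioc 0 k := Icc_add_one_left_eq_Ioc 0
  rw [hIcc, hIcc, ← sum_Ioc_consecutive f (Nat.zero_le N) h, add_sub_cancel_left]

theorem exists_eventually_forall_abs_le_mul_rpow {f : ℕ → ℝ} {p : ℝ} (hp : 0 ≤ p)
    (h : ∃ C : ℝ, ∃ n₀ : ℕ, ∀ n, n₀ ≤ n → |f n| ≤ C * (n : ℝ) ^ p) :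
    ∃ K, 0 ≤ K ∧ ∀ᶠ x : ℝ in atTop, ∀ n : ℕ, x - 1 < n → (n : ℝ) ≤ 2 * x → |f n| ≤ K * x ^ p := by
  obtain ⟨C, n₀, hC⟩ := h
  refine ⟨max C 0 * 2 ^ p, by positivity, ?_⟩
  filter_upwards [eventually_ge_atTop ((n₀ : ℝ) + 1)] with x hx n hxn hn
  calc |f n| ≤ C * (n : ℝ) ^ p := hC n (by exact_mod_cast (by linarith : (n₀ : ℝ) ≤ n))
    _ ≤ max C 0 * (2 * x) ^ p := by gcongr; exact le_max_left _ _
    _ = max C 0 * 2 ^ p * x ^ p := by rw [Real.mul_rpow zero_le_two (by linarith)]; ring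

theorem eventually_mul_rpow_le_mul_rpow {p q : ℝ} (hpq : p < q) (K : ℝ) {ε : ℝ} (hε : 0 < ε) :
    ∀ᶠ x : ℝ in atTop, K * x ^ p ≤ ε * x ^ q := by
  filter_upwards [(tendsto_rpow_atTop (sub_pos.2 hpq)).eventually_ge_atTop (K / ε),
    eventually_gt_atTop 0] with x hx hx0
  calc K * x ^ p = K / ε * (ε * x ^ p) := by field_simp
    _ ≤ x ^ (q - p) * (ε * x ^ p) := by gcongr
    _ = ε * x ^ q := by rw [mul_left_comm, ← Real.rpow_add hx0, sub_add_cancel]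

theorem le_ncard_of_forall_exists_mem_window {S : Set ℕ} (hS : S.Finite) {t₀ L : ℝ} (hL : 0 ≤ L)
    {K : ℕ} (h : ∀ j : Fin K, ∃ n ∈ S, t₀ + j * (L + 1) ≤ n ∧ (n : ℝ) ≤ t₀ + j * (L + 1) + L) :
    K ≤ S.ncard := by
  choose f hfS hf using h
  have hmono : StrictMono f := fun i j hij => by
    have hij' : ((i : ℕ) : ℝ) + 1 ≤ (j : ℕ) := by exact_mod_cast hij
    have := (hf i).2
    have := (hf j).1
    exact_mod_cast (show (f i : ℝ) < f j by
      linarith [mul_le_mul_of_nonneg_right hij' (by linarith : (0 : ℝ) ≤ L + 1)])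
  simpa using
    Set.ncard_le_ncard_of_injOn (s := Set.univ) f (fun i _ => hfS i) hmono.injective.injOn hS

theorem mem_Icc_of_mem_Ioc_floor {x y : ℝ} {n : ℕ} (hx : 0 ≤ x) (hn : n ∈ Ioc ⌊x⌋₊ ⌊y⌋₊) :
    x ≤ n ∧ (n : ℝ) ≤ y := by
  obtain ⟨hxn, hny⟩ := mem_Ioc.1 hn
  exact ⟨((Nat.floor_lt hx).1 hxn).le, (Nat.le_floor_iff' (by omega)).1 hny⟩

theorem eventually_exists_pos_neg_in_window (a : ℕ → ℝ) {α β γ c δ : ℝ}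
    (hα : 0 ≤ α) (hβ : 0 ≤ β) (hγ : 0 ≤ γ) (hc : 0 < c)
    (h1 : ∃ C : ℝ, ∃ n₀ : ℕ, ∀ n : ℕ, n₀ ≤ n → |a n| ≤ C * (n : ℝ) ^ α)
    (h2 : ∃ C : ℝ, ∃ n₀ : ℕ, ∀ x : ℕ, n₀ ≤ x →
      |∑ n ∈ Icc 1 x, a n| ≤ C * (x : ℝ) ^ β)
    (h3 : ∃ C : ℝ, ∃ n₀ : ℕ, ∀ x : ℕ, n₀ ≤ x →
      |∑ n ∈ Icc 1 x, a n ^ 2 - c * (x : ℝ)| ≤ C * (x : ℝ) ^ γ)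
    (hαβδ : α + β < δ) (hγδ : γ < δ) (hδ : δ ≤ 1) :
    ∀ᶠ x : ℝ in atTop, ∃ m n : ℕ, x ≤ m ∧ (m : ℝ) ≤ x + x ^ δ ∧ x ≤ n ∧ (n : ℝ) ≤ x + x ^ δ ∧
      0 < a m ∧ a n < 0 := by
  obtain ⟨K₁, hK₁, hb₁⟩ := exists_eventually_forall_abs_le_mul_rpow hα h1
  obtain ⟨K₂, -, hb₂⟩ := exists_eventually_forall_abs_le_mul_rpow hβ h2
  obtain ⟨K₃, -, hb₃⟩ := exists_eventually_forall_abs_le_mul_rpow hγ h3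
  have hc4 : 0 < c / 4 := by positivity
  filter_upwards [hb₁, hb₂, hb₃, eventually_ge_atTop 1,
    eventually_mul_rpow_le_mul_rpow (by linarith : 0 < δ) c hc4,
    eventually_mul_rpow_le_mul_rpow hγδ (2 * K₃) hc4,
    eventually_mul_rpow_le_mul_rpow hαβδ (2 * K₁ * K₂) hc4]
    with x hb₁ hb₂ hb₃ hx1 hc_le hγ_le hαβ_le
  rw [Real.rpow_zero, mul_one] at hc_le
  have hx0 : 0 < x := by linarith
  have hxδ : 0 < x ^ δ := Real.rpow_pos_of_pos hx0 δ
  set N := ⌊x⌋₊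
  set M := ⌊x + x ^ δ⌋₊
  have hNM : N ≤ M := Nat.floor_mono (by linarith)
  have hN : x - 1 < N := Nat.sub_one_lt_floor x
  have hM : x - 1 < M := hN.trans_le (Nat.cast_le.2 hNM)
  have hM2x : (M : ℝ) ≤ 2 * x :=
    (Nat.floor_le (by positivity)).trans (by linarith [Real.rpow_le_self_of_one_le hx1 hδ])
  have hN2x : (N : ℝ) ≤ 2 * x := (Nat.cast_le.2 hNM).trans hM2x
  have hterm : ∀ n ∈ Ioc N M, |a n| ≤ K₁ * x ^ α := fun n hn =>
    hb₁ n (hN.trans (Nat.cast_lt.2 (mem_Ioc.1 hn).1)) ((Nat.cast_le.2 (mem_Ioc.1 hn).2).trans hM2x)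
  have hsum : |∑ n ∈ Ioc N M, a n| ≤ 2 * K₂ * x ^ β := by
    rw [sum_Ioc_eq_sum_Icc_one_sub _ hNM]
    linarith [abs_sub (∑ n ∈ Icc 1 M, a n) (∑ n ∈ Icc 1 N, a n), hb₂ M hM hM2x, hb₂ N hN hN2x]
  have hsq : c * (x ^ δ - 1) - 2 * K₃ * x ^ γ ≤ ∑ n ∈ Ioc N M, a n ^ 2 := by
    have hlen : x ^ δ - 1 ≤ (M : ℝ) - N := by
      linarith [Nat.floor_le hx0.le, Nat.sub_one_lt_floor (x + x ^ δ)]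
    rw [sum_Ioc_eq_sum_Icc_one_sub _ hNM]
    linarith [abs_le.1 (hb₃ M hM hM2x), abs_le.1 (hb₃ N hN hN2x),
      mul_le_mul_of_nonneg_left hlen hc.le]
  obtain ⟨⟨m, hm, ham⟩, n, hn, han⟩ := exists_pos_and_neg_of_mul_abs_sum_lt_sum_sq hterm <| by
    calc K₁ * x ^ α * |∑ n ∈ Ioc N M, a n| ≤ K₁ * x ^ α * (2 * K₂ * x ^ β) := by gcongr
      _ = 2 * K₁ * K₂ * x ^ (α + β) := by rw [Real.rpow_add hx0]; ring
      _ < c * (x ^ δ - 1) - 2 * K₃ * x ^ γ := by linarith [mul_pos hc hxδ]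
      _ ≤ ∑ n ∈ Ioc N M, a n ^ 2 := hsq
  obtain ⟨hxm, hmx⟩ := mem_Icc_of_mem_Ioc_floor hx0.le hm
  obtain ⟨hxn, hnx⟩ := mem_Icc_of_mem_Ioc_floor hx0.le hn
  exact ⟨m, n, hxm, hmx, hxn, hnx, ham, han⟩

theorem exists_mul_rpow_le_ncard_of_eventually_mem_window {P : ℕ → Prop} {δ : ℝ} (hδ0 : 0 < δ)
    (hδ1 : δ < 1) (h : ∀ᶠ t : ℝ in atTop, ∃ n : ℕ, P n ∧ t ≤ n ∧ (n : ℝ) ≤ t + t ^ δ) :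
    ∃ c' : ℝ, 0 < c' ∧ ∃ x₁ : ℕ, ∀ x : ℕ, x₁ ≤ x →
      c' * (x : ℝ) ^ (1 - δ) ≤ ({n : ℕ | 1 ≤ n ∧ n ≤ x ∧ P n}.ncard : ℝ) := by
  obtain ⟨t₀, ht₀⟩ := eventually_atTop.1 h
  obtain ⟨X₀, hX₀⟩ := eventually_atTop.1 <| (eventually_ge_atTop (max 2 (2 * t₀))).and <|
    ((tendsto_rpow_atTop hδ0).eventually_ge_atTop 1).and
      ((tendsto_rpow_atTop (sub_pos.2 hδ1)).eventually_ge_atTop 8)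
  refine ⟨1 / 8, by norm_num, ⌈X₀⌉₊, fun x hx => ?_⟩
  obtain ⟨hx, hL1, hx8⟩ := hX₀ x (Nat.ceil_le.1 hx)
  rw [max_le_iff] at hx
  have hx0 : (0 : ℝ) < x := by linarith [hx.1]
  set L := (x : ℝ) ^ δ
  set K := ⌊(x / 2 : ℝ) / (L + 1)⌋₊
  have hL : 0 < L + 1 := by linarith
  have hK : K * (L + 1) ≤ x / 2 := (le_div_iff₀ hL).1 (Nat.floor_le (by positivity))
  -- the windows `[x/2 + j(L+1), x/2 + j(L+1) + L]`, `j < K`, are disjoint and lie in `[x/2, x]`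
  have hwin : ∀ j : Fin K, ∃ n ∈ {n : ℕ | 1 ≤ n ∧ n ≤ x ∧ P n},
      x / 2 + j * (L + 1) ≤ n ∧ (n : ℝ) ≤ x / 2 + j * (L + 1) + L := by
    intro j
    set t := x / 2 + j * (L + 1) with ht
    have ht_lo : (x / 2 : ℝ) ≤ t := le_add_of_nonneg_right (by positivity)
    have ht_hi : t + L ≤ x := by
      have : ((j : ℕ) + 1 : ℝ) * (L + 1) ≤ K * (L + 1) := by gcongr; exact_mod_cast j.isLt
      linarith [ht]
    obtain ⟨n, hPn, htn, hnt⟩ := ht₀ t (by linarith [hx.2])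
    have htδ : t ^ δ ≤ L := Real.rpow_le_rpow (by positivity) (by linarith) hδ0.le
    refine ⟨n, ⟨?_, ?_, hPn⟩, htn, by linarith⟩
    · exact_mod_cast (show (1 : ℝ) ≤ n by linarith [hx.1])
    · exact_mod_cast (show (n : ℝ) ≤ x by linarith)
  have hcard := le_ncard_of_forall_exists_mem_window
    ((Set.finite_Icc 1 x).subset fun n hn => ⟨hn.1, hn.2.1⟩) (by positivity) hwin
  have hxL : (x : ℝ) ^ (1 - δ) * L = x := by
    rw [← Real.rpow_add hx0, sub_add_cancel, Real.rpow_one]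
  calc 1 / 8 * (x : ℝ) ^ (1 - δ) ≤ (x / 2) / (L + 1) - 1 := by
        rw [le_sub_iff_add_le, le_div_iff₀ hL]; nlinarith
    _ ≤ K := (Nat.sub_one_lt_floor _).le
    _ ≤ _ := by exact_mod_cast hcard

theorem meher_murty_sign_changes_general
    (a : ℕ → ℝ) (α β γ c : ℝ)
    (hα : 0 ≤ α) (hβ : 0 ≤ β) (hγ : 0 ≤ γ) (hc : 0 < c)
    (h1 : ∃ C : ℝ, ∃ n₀ : ℕ, ∀ n : ℕ, n₀ ≤ n → |a n| ≤ C * (n : ℝ) ^ α)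
    (h2 : ∃ C : ℝ, ∃ n₀ : ℕ, ∀ x : ℕ, n₀ ≤ x →
      |∑ n ∈ Finset.Icc 1 x, a n| ≤ C * (x : ℝ) ^ β)
    (h3 : ∃ C : ℝ, ∃ n₀ : ℕ, ∀ x : ℕ, n₀ ≤ x →
      |∑ n ∈ Finset.Icc 1 x, (a n) ^ 2 - c * (x : ℝ)| ≤ C * (x : ℝ) ^ γ)
    (δ : ℝ) (hδ₁ : max (α + β) γ < δ) (hδ₂ : δ < 1) :
    (∃ x₀ : ℝ, ∀ x : ℝ, x₀ ≤ x →
      ∃ m n : ℕ, x ≤ (m : ℝ) ∧ (m : ℝ) ≤ x + x ^ δ ∧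
        x ≤ (n : ℝ) ∧ (n : ℝ) ≤ x + x ^ δ ∧ 0 < a m ∧ a n < 0) ∧
    (∃ c' : ℝ, 0 < c' ∧ ∃ x₁ : ℕ, ∀ x : ℕ, x₁ ≤ x →
      c' * (x : ℝ) ^ (1 - δ) ≤
        ({n : ℕ | 1 ≤ n ∧ n ≤ x ∧ ∃ m : ℕ, n < m ∧ a n * a m < 0 ∧
          ∀ k : ℕ, n < k → k < m → a k = 0}.ncard : ℝ)) := by
  have hαβδ : α + β < δ := (le_max_left _ _).trans_lt hδ₁
  have hwindow := eventually_exists_pos_neg_in_window a hα hβ hγ hc h1 h2 h3 hαβδ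
    ((le_max_right _ _).trans_lt hδ₁) hδ₂.le
  refine ⟨eventually_atTop.1 hwindow, ?_⟩
  exact exists_mul_rpow_le_ncard_of_eventually_mem_window (P := SignChangeAt a) (by linarith) hδ₂ <|
    hwindow.mono fun x ⟨m, n, hxm, hmx, hxn, hnx, ham, han⟩ =>
      exists_signChangeAt_mem_Icc ham han hxm hmx hxn hnx

/-- **Theorem (Meher–Murty sign change criterion).**
Let `(a_n)` be a real sequence with `a_n = O(n^α)`, `Σ_{n≤x} a_n = O(x^β)` and
`Σ_{n≤x} a_n² = c x + O(x^γ)` where `α, β, γ ≥ 0`, `c > 0` and `α + β < 1`.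
Then for any `δ` with `max{α+β, γ} < δ < 1`, for all sufficiently large `x`
the sequence has a sign change (both a positive and a negative term) among the
indices `n ∈ [x, x + x^δ]`; consequently the number of sign changes of `(a_n)`
for `n ≤ x` is `≫ x^{1-δ}`. -/
theorem meher_murty_sign_changes
    (a : ℕ → ℝ) (α β γ c : ℝ)
    (hα : 0 ≤ α) (hβ : 0 ≤ β) (hγ : 0 ≤ γ) (hc : 0 < c)
    (h1 : ∃ C : ℝ, ∃ n₀ : ℕ, ∀ n : ℕ, n₀ ≤ n → |a n| ≤ C * (n : ℝ) ^ α)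
    (h2 : ∃ C : ℝ, ∃ n₀ : ℕ, ∀ x : ℕ, n₀ ≤ x →
      |∑ n ∈ Finset.Icc 1 x, a n| ≤ C * (x : ℝ) ^ β)
    (h3 : ∃ C : ℝ, ∃ n₀ : ℕ, ∀ x : ℕ, n₀ ≤ x →
      |∑ n ∈ Finset.Icc 1 x, (a n) ^ 2 - c * (x : ℝ)| ≤ C * (x : ℝ) ^ γ)
    (hαβ : α + β < 1)
    (δ : ℝ) (hδ₁ : max (α + β) γ < δ) (hδ₂ : δ < 1) :
    (∃ x₀ : ℝ, ∀ x : ℝ, x₀ ≤ x →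
      ∃ m n : ℕ, x ≤ (m : ℝ) ∧ (m : ℝ) ≤ x + x ^ δ ∧
        x ≤ (n : ℝ) ∧ (n : ℝ) ≤ x + x ^ δ ∧ 0 < a m ∧ a n < 0) ∧
    (∃ c' : ℝ, 0 < c' ∧ ∃ x₁ : ℕ, ∀ x : ℕ, x₁ ≤ x →
      c' * (x : ℝ) ^ (1 - δ) ≤
        ({n : ℕ | 1 ≤ n ∧ n ≤ x ∧ ∃ m : ℕ, n < m ∧ a n * a m < 0 ∧
          ∀ k : ℕ, n < k → k < m → a k = 0}.ncard : ℝ)) :=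
  meher_murty_sign_changes_general a α β γ c hα hβ hγ hc h1 h2 h3 δ hδ₁ hδ₂
end

section
/- Let r and s be natural numbers with r, s ≥ 2, set α = (r-1)(s-1)/(rs), and let C = 2^{rs}·rs. For a sufficiently large natural number n, put t = ⌊n^{1/s}⌋ and let x₁, x₂ be the positive real numbers defined by x₁^r + t^s = n and x₂^r + t^s = n + C·n^α. Then x₂ - x₁ > 1; consequently there is a natural number A with x₁ ≤ A ≤ x₂, and m := A^r + t^s satisfies n ≤ m ≤ n + C·n^α. -/
/-!
Write `n = m ^ (r * s)` with `m = n ^ (1 / (r * s))` and put `M = m ^ (s - 1)`, so that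
`n ^ α = M ^ (r - 1)` and `t = ⌊m ^ r⌋`. The mean value bound for `u ↦ u ^ s` gives
`x₁ ^ r = n - t ^ s ≤ s · M ^ r`; once `C ≤ M`, the increment `C · n ^ α` is at most `M ^ r`, so
`x₂ ^ (r - 1) ≤ (s + 1) · M ^ (r - 1)`. The mean value bound for `x ↦ x ^ r` then turns
`x₂ ^ r - x₁ ^ r = C · M ^ (r - 1)` into `C ≤ r (s + 1) (x₂ - x₁)`, and `C = 2 ^ (r s) · r s` exceeds
`r (s + 1)`. The condition `C ≤ M` is what "sufficiently large" means: `M = n ^ ((s - 1) / (r s)) → ∞`.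
-/

open Filter

lemma pow_sub_pow_le_mul_pow_pred_mul_sub {a b : ℝ} (hb : 0 ≤ b) (hba : b ≤ a) (p : ℕ) :
    a ^ p - b ^ p ≤ p * a ^ (p - 1) * (a - b) := by
  have ha : 0 ≤ a := hb.trans hba
  rw [← geom_sum₂_mul]
  refine mul_le_mul_of_nonneg_right ?_ (sub_nonneg.mpr hba)
  calc ∑ i ∈ Finset.range p, a ^ i * b ^ (p - 1 - i)
      ≤ ∑ _i ∈ Finset.range p, a ^ (p - 1) := by
        refine Finset.sum_le_sum fun i hi => ?_
        calc a ^ i * b ^ (p - 1 - i) ≤ a ^ i * a ^ (p - 1 - i) := by gcongr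
          _ = a ^ (p - 1) := by rw [← pow_add]; congr 1; have := Finset.mem_range.mp hi; omega
    _ = p * a ^ (p - 1) := by simp

lemma pow_sub_natFloor_pow_le {u : ℝ} (hu : 0 ≤ u) (s : ℕ) :
    u ^ s - (⌊u⌋₊ : ℝ) ^ s ≤ s * u ^ (s - 1) := by
  calc u ^ s - (⌊u⌋₊ : ℝ) ^ s ≤ s * u ^ (s - 1) * (u - ⌊u⌋₊) :=
        pow_sub_pow_le_mul_pow_pred_mul_sub (Nat.cast_nonneg _) (Nat.floor_le hu) s
    _ ≤ s * u ^ (s - 1) * 1 := by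
        gcongr
        linarith [Nat.lt_floor_add_one u]
    _ = s * u ^ (s - 1) := mul_one _

lemma pow_pred_le_of_pow_le {x M K : ℝ} {r : ℕ} (hx : 0 ≤ x) (hM : 0 ≤ M) (hK : 1 ≤ K)
    (h : x ^ r ≤ K * M ^ r) : x ^ (r - 1) ≤ K * M ^ (r - 1) := by
  rcases Nat.eq_zero_or_pos r with rfl | hr
  · simpa using hK
  refine (pow_le_pow_iff_left₀ (by positivity) (by positivity) hr.ne').mp ?_
  calc (x ^ (r - 1)) ^ r = (x ^ r) ^ (r - 1) := by rw [← pow_mul, ← pow_mul, mul_comm]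
    _ ≤ (K * M ^ r) ^ (r - 1) := by gcongr
    _ = K ^ (r - 1) * (M ^ (r - 1)) ^ r := by rw [mul_pow, ← pow_mul, ← pow_mul, mul_comm r]
    _ ≤ K ^ r * (M ^ (r - 1)) ^ r :=
        mul_le_mul_of_nonneg_right (pow_le_pow_right₀ hK (Nat.sub_le r 1)) (by positivity)
    _ = (K * M ^ (r - 1)) ^ r := (mul_pow _ _ _).symm

lemma le_mul_sub_of_pow_eq_pow_add {x y δ K : ℝ} {r : ℕ} (hx : 0 ≤ x) (hy : 0 ≤ y) (hδ : 0 ≤ δ)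
    (h : y ^ r = x ^ r + δ) (hK : y ^ (r - 1) ≤ K) : δ ≤ r * K * (y - x) := by
  rcases Nat.eq_zero_or_pos r with rfl | hr
  · simp only [pow_zero] at h
    simp only [Nat.cast_zero, zero_mul]
    linarith
  have hxy : x ≤ y := (pow_le_pow_iff_left₀ hx hy hr.ne').mp (by linarith)
  calc δ = y ^ r - x ^ r := by rw [h]; ring
    _ ≤ r * y ^ (r - 1) * (y - x) := pow_sub_pow_le_mul_pow_pred_mul_sub hx hxy r
    _ ≤ r * K * (y - x) := by gcongr

lemma le_mul_sub_of_pow_le_mul_pow {x₁ x₂ M C k : ℝ} {r : ℕ} (hr : 1 ≤ r) (hk : 0 ≤ k)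
    (hM : 0 < M) (hC : 0 ≤ C) (hCM : C ≤ M) (hx₁ : 0 ≤ x₁) (hx₂ : 0 ≤ x₂)
    (h₁ : x₁ ^ r ≤ k * M ^ r) (h₂ : x₂ ^ r = x₁ ^ r + C * M ^ (r - 1)) :
    C ≤ r * (k + 1) * (x₂ - x₁) := by
  have hMr : M ^ r = M * M ^ (r - 1) := by rw [← pow_succ', Nat.sub_add_cancel hr]
  have hx₂r : x₂ ^ r ≤ (k + 1) * M ^ r := by
    have : C * M ^ (r - 1) ≤ M ^ r := by rw [hMr]; gcongr
    linarith
  have hx₂r' := pow_pred_le_of_pow_le hx₂ hM.le (by linarith) hx₂r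
  have := le_mul_sub_of_pow_eq_pow_add hx₁ hx₂ (by positivity) h₂ hx₂r'
  have hMpos : 0 < M ^ (r - 1) := by positivity
  nlinarith

lemma rpow_one_div_mul_pow {x : ℝ} (hx : 0 ≤ x) (a b k : ℕ) :
    (x ^ (1 / ((a : ℝ) * b))) ^ k = x ^ ((k : ℝ) / (a * b)) := by
  rw [← Real.rpow_mul_natCast hx, one_div_mul_eq_div]

lemma natFloor_rpow_one_div_pow_le {x : ℝ} (hx : 0 ≤ x) {s : ℕ} (hs : s ≠ 0) :
    (⌊x ^ (1 / (s : ℝ))⌋₊ : ℝ) ^ s ≤ x :=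
  calc (⌊x ^ (1 / (s : ℝ))⌋₊ : ℝ) ^ s ≤ (x ^ (1 / (s : ℝ))) ^ s := by
        gcongr; exact Nat.floor_le (by positivity)
    _ = x := by rw [one_div, Real.rpow_inv_natCast_pow hx hs]

lemma exists_nat_pow_mem_Icc {a b x₁ x₂ : ℝ} (ha : 0 ≤ a) (hab : a ≤ b) {r : ℕ} (hr : r ≠ 0)
    (hx₁ : x₁ = a ^ (1 / (r : ℝ))) (hx₂ : x₂ = b ^ (1 / (r : ℝ))) (h : 1 ≤ x₂ - x₁) :
    ∃ A : ℕ, x₁ ≤ A ∧ (A : ℝ) ≤ x₂ ∧ a ≤ (A : ℝ) ^ r ∧ (A : ℝ) ^ r ≤ b := by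
  subst hx₁ hx₂
  have ha_root : 0 ≤ a ^ (1 / (r : ℝ)) := Real.rpow_nonneg ha _
  have hA₁ : a ^ (1 / (r : ℝ)) ≤ ⌈a ^ (1 / (r : ℝ))⌉₊ := Nat.le_ceil _
  have hA₂ : (⌈a ^ (1 / (r : ℝ))⌉₊ : ℝ) ≤ b ^ (1 / (r : ℝ)) := by
    linarith [Nat.ceil_lt_add_one ha_root]
  refine ⟨_, hA₁, hA₂, ?_, ?_⟩
  · calc a = (a ^ (1 / (r : ℝ))) ^ r := by rw [one_div, Real.rpow_inv_natCast_pow ha hr]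
      _ ≤ _ := by gcongr
  · calc _ ≤ (b ^ (1 / (r : ℝ))) ^ r := by gcongr
      _ = b := by rw [one_div, Real.rpow_inv_natCast_pow (ha.trans hab) hr]

lemma one_lt_sub_of_le_rpow {r s t : ℕ} (hr : 1 ≤ r) (hs : 1 ≤ s) {x α C x₁ x₂ : ℝ}
    (hx : 0 < x) (hα : α = ((r - 1) * (s - 1)) / (r * s)) (hC : r * (s + 1) < C)
    (hCx : C ≤ (x ^ (1 / ((r : ℝ) * s))) ^ (s - 1)) (ht : t = ⌊x ^ (1 / (s : ℝ))⌋₊)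
    (hx₁ : x₁ = (x - (t : ℝ) ^ s) ^ (1 / (r : ℝ)))
    (hx₂ : x₂ = (x + C * x ^ α - (t : ℝ) ^ s) ^ (1 / (r : ℝ))) :
    1 < x₂ - x₁ := by
  set m := x ^ (1 / ((r : ℝ) * s))
  have hm : 0 < m := Real.rpow_pos_of_pos hx _
  have hrs : (r : ℝ) * s ≠ 0 := by positivity
  have hx_eq : x = (m ^ r) ^ s := by
    rw [← pow_mul, rpow_one_div_mul_pow hx.le, Nat.cast_mul, div_self hrs, Real.rpow_one]
  have hx_root : x ^ (1 / (s : ℝ)) = m ^ r := by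
    rw [rpow_one_div_mul_pow hx.le]; congr 1; field_simp
  have hxα : x ^ α = (m ^ (s - 1)) ^ (r - 1) := by
    rw [← pow_mul, rpow_one_div_mul_pow hx.le, hα, Nat.cast_mul, Nat.cast_sub hr, Nat.cast_sub hs]
    ring_nf
  have hts : (t : ℝ) ^ s ≤ x := ht ▸ natFloor_rpow_one_div_pow_le hx.le (by omega)
  have hK : 0 < (r : ℝ) * (s + 1) := by positivity
  have hC₀ : 0 ≤ C := by linarith
  have hCα : 0 ≤ C * x ^ α := by positivity
  have hx₁r : x₁ ^ r = x - t ^ s := by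
    rw [hx₁, one_div, Real.rpow_inv_natCast_pow (by linarith) (by omega)]
  have hx₂r : x₂ ^ r = x₁ ^ r + C * (m ^ (s - 1)) ^ (r - 1) := by
    rw [hx₂, one_div, Real.rpow_inv_natCast_pow (by linarith) (by omega), hx₁r, ← hxα]; ring
  have hx₁_le : x₁ ^ r ≤ s * (m ^ (s - 1)) ^ r :=
    calc x₁ ^ r = (m ^ r) ^ s - (⌊m ^ r⌋₊ : ℝ) ^ s := by rw [hx₁r, ht, hx_root, ← hx_eq]
      _ ≤ s * (m ^ r) ^ (s - 1) := pow_sub_natFloor_pow_le (by positivity) s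
      _ = s * (m ^ (s - 1)) ^ r := by rw [← pow_mul, ← pow_mul, mul_comm r]
  have hgap := le_mul_sub_of_pow_le_mul_pow hr (Nat.cast_nonneg s) (pow_pos hm _) hC₀ hCx
    (hx₁ ▸ Real.rpow_nonneg (by linarith) _) (hx₂ ▸ Real.rpow_nonneg (by linarith) _) hx₁_le hx₂r
  by_contra! h
  nlinarith [mul_le_mul_of_nonneg_left h hK.le]

/-- **Theorem (key step of the Bambah–Chowla argument).**
Let `r, s ≥ 2`, `α = (r-1)(s-1)/(rs)` and `C = 2^{rs}·rs`. For sufficiently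
large `n`, putting `t = ⌊n^{1/s}⌋`, `x₁ = (n - t^s)^{1/r}` and
`x₂ = (n + C·n^α - t^s)^{1/r}`, one has `x₂ - x₁ > 1`; consequently there is a
natural number `A` with `x₁ ≤ A ≤ x₂`, and `m := A^r + t^s` satisfies
`n ≤ m ≤ n + C·n^α`. -/
theorem bambah_chowla_key_step
    (r s : ℕ) (hr : 2 ≤ r) (hs : 2 ≤ s) (α C : ℝ)
    (hα : α = (((r : ℝ) - 1) * ((s : ℝ) - 1)) / ((r : ℝ) * (s : ℝ)))
    (hC : C = 2 ^ (r * s) * ((r : ℝ) * (s : ℝ))) :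
    ∃ n₀ : ℕ, ∀ n : ℕ, n₀ ≤ n → ∀ t : ℕ, ∀ x₁ x₂ : ℝ,
      t = ⌊(n : ℝ) ^ ((1 : ℝ) / (s : ℝ))⌋₊ →
      x₁ = ((n : ℝ) - (t : ℝ) ^ s) ^ ((1 : ℝ) / (r : ℝ)) →
      x₂ = ((n : ℝ) + C * (n : ℝ) ^ α - (t : ℝ) ^ s) ^ ((1 : ℝ) / (r : ℝ)) →
      1 < x₂ - x₁ ∧
        ∃ A : ℕ, x₁ ≤ (A : ℝ) ∧ (A : ℝ) ≤ x₂ ∧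
          (n : ℝ) ≤ ((A ^ r + t ^ s : ℕ) : ℝ) ∧
          ((A ^ r + t ^ s : ℕ) : ℝ) ≤ (n : ℝ) + C * (n : ℝ) ^ α := by
  have hC_gt : (r : ℝ) * (s + 1) < C := by
    have hr' : (1 : ℝ) ≤ r := by exact_mod_cast (by omega : 1 ≤ r)
    have hs' : (2 : ℝ) ≤ s := by exact_mod_cast hs
    calc (r : ℝ) * (s + 1) < 2 * (r * s) := by nlinarith
      _ ≤ 2 ^ (r * s) * (r * s) := by gcongr; exact le_self_pow₀ one_le_two (by positivity)
      _ = C := hC.symm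
  have hM : Tendsto (fun n : ℕ ↦ ((n : ℝ) ^ (1 / ((r : ℝ) * s))) ^ (s - 1)) atTop atTop :=
    (tendsto_pow_atTop (by omega)).comp <|
      (tendsto_rpow_atTop (by positivity)).comp tendsto_natCast_atTop_atTop
  obtain ⟨n₀, hn₀⟩ := eventually_atTop.mp <|
    (eventually_gt_atTop 0).and (hM.eventually_ge_atTop C)
  refine ⟨n₀, fun n hn t x₁ x₂ ht hx₁ hx₂ => ?_⟩
  obtain ⟨hn_pos, hCn⟩ := hn₀ n hn
  have h_one_lt :=
    one_lt_sub_of_le_rpow (by omega) (by omega) (Nat.cast_pos.mpr hn_pos) hα hC_gt hCn ht hx₁ hx₂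
  have hts : (t : ℝ) ^ s ≤ n := ht ▸ natFloor_rpow_one_div_pow_le (Nat.cast_nonneg n) (by omega)
  have hCα : 0 ≤ C * (n : ℝ) ^ α := by rw [hC]; positivity
  obtain ⟨A, hA₁, hA₂, hAr₁, hAr₂⟩ :=
    exists_nat_pow_mem_Icc (sub_nonneg.mpr hts) (by linarith) (by omega) hx₁ hx₂ h_one_lt.le
  refine ⟨h_one_lt, A, hA₁, hA₂, ?_, ?_⟩ <;> push_cast <;> linarith
end
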